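/- arXiv:1908.07315 — 3 statements merged into one kernel-verified Lean document; each statement's English description precedes it below -/
import Mathlib

section
/- If β and γ are real numbers with β + γ = 2π/3 and 0 < β < π/3, then 2·cos(β) + cos(γ) > 1. -/
/-! With `γ = 2π/3 - β`, the addition formulas give
`2 cos β + cos γ = √3 sin (β + π/3)`, and `β + π/3 ∈ (π/3, 2π/3)`, where `sin > √3/2`.
Hence the left side even exceeds `3/2`. -/

open Real

lemma sqrt_three_div_two_lt_sin {x : ℝ} (h₁ : π / 3 < x) (h₂ : x < 2 * π / 3) :
    √3 / 2 < sin x := by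
  rw [← sin_pi_div_three]
  rcases le_or_gt x (π / 2) with h | h
  · exact strictMonoOn_sin ⟨by linarith, by linarith⟩ ⟨by linarith, h⟩ h₁
  · rw [← sin_pi_sub x]
    exact strictMonoOn_sin ⟨by linarith, by linarith⟩ ⟨by linarith, by linarith⟩ (by linarith)

lemma two_mul_cos_add_cos_two_pi_div_three_sub (x : ℝ) :
    2 * cos x + cos (2 * π / 3 - x) = √3 * sin (x + π / 3) := by
  have h3 : √3 ^ 2 = 3 := sq_sqrt (by norm_num)
  rw [show 2 * π / 3 - x = π - (x + π / 3) by ring, cos_pi_sub, cos_add, sin_add,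
    cos_pi_div_three, sin_pi_div_three]
  linear_combination (-cos x / 2) * h3

theorem stmt1 (β γ : ℝ) (hsum : β + γ = 2 * Real.pi / 3)
    (hβ0 : 0 < β) (hβ : β < Real.pi / 3) :
    2 * Real.cos β + Real.cos γ > 1 := by
  obtain rfl : γ = 2 * π / 3 - β := by linarith
  have hsin : √3 / 2 < sin (β + π / 3) := sqrt_three_div_two_lt_sin (by linarith) (by linarith)
  calc 1 < √3 * (√3 / 2) := by rw [← mul_div_assoc, mul_self_sqrt (by norm_num)]; norm_num
    _ < √3 * sin (β + π / 3) := mul_lt_mul_of_pos_left hsin (by positivity)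
    _ = 2 * cos β + cos (2 * π / 3 - β) := (two_mul_cos_add_cos_two_pi_div_three_sub β).symm
end

section
/- Let T be a unit equilateral triangle with height h = √3/2 and y = h/3. Suppose p₁ is a vertex of T and p₂ lies on the side opposite p₁ (so |p₁p₂| ≥ h). Suppose two agents move at speed at most 1, agent 1 is at p₁ at time t′ ≥ 1/2 + y and agent 2 is at p₂ at time t with t′ < t < 1/2 + 4y − r, where 0 ≤ r. Then at no time t_z ∈ [t′, t] can the two agents be within distance r of each other. -/
/-! An agent of speed at most `1` covers at most `t - t'` between times `t'` and `t`. If the two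
agents were within `r` of each other at some `tz ∈ [t', t]`, going from `p₁` to agent 1 at `tz`,
across to agent 2 and on to `p₂` would give `|p₁p₂| ≤ (t - t') + r < 3y = h`. -/

lemma LipschitzWith.dist_le_sub_of_le {E : Type*} [PseudoMetricSpace E] {f : ℝ → E}
    (hf : LipschitzWith 1 f) {s u : ℝ} (hsu : s ≤ u) : dist (f s) (f u) ≤ u - s := by
  have h := hf.dist_le_mul s u
  rwa [NNReal.coe_one, one_mul, Real.dist_eq, abs_sub_comm, abs_of_nonneg (sub_nonneg.2 hsu)] at h

lemma dist_le_dist_add_sub_of_lipschitzWith_one {E : Type*} [PseudoMetricSpace E] {f g : ℝ → E}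
    (hf : LipschitzWith 1 f) (hg : LipschitzWith 1 g) {s u v : ℝ} (hsu : s ≤ u) (huv : u ≤ v) :
    dist (f s) (g v) ≤ dist (f u) (g u) + (v - s) :=
  calc dist (f s) (g v) ≤ dist (f s) (f u) + dist (f u) (g u) + dist (g u) (g v) :=
        dist_triangle4 _ _ _ _
    _ ≤ (u - s) + dist (f u) (g u) + (v - u) := by
        gcongr
        exacts [hf.dist_le_sub_of_le hsu, hg.dist_le_sub_of_le huv]
    _ = dist (f u) (g u) + (v - s) := by ring

theorem stmt7_general (p₁ p₂ : EuclideanSpace ℝ (Fin 2)) (r t' t : ℝ)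
    (h : ℝ) (y : ℝ) (hy : y = h / 3)
    (hopp : dist p₁ p₂ ≥ h)
    (f g : ℝ → EuclideanSpace ℝ (Fin 2))
    (hf : LipschitzWith 1 f) (hg : LipschitzWith 1 g)
    (hf1 : f t' = p₁) (hg2 : g t = p₂)
    (ht' : t' ≥ 1 / 2 + y) (ht : t < 1 / 2 + 4 * y - r) :
    ∀ tz ∈ Set.Icc t' t, dist (f tz) (g tz) > r := by
  rintro tz ⟨ht'tz, htzt⟩
  have hp := dist_le_dist_add_sub_of_lipschitzWith_one hf hg ht'tz htzt
  rw [hf1, hg2] at hp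
  linarith

/-- Generalized Meeting Lemma. -/
theorem stmt7 (p₁ p₂ : EuclideanSpace ℝ (Fin 2)) (r t' t : ℝ) (hr : 0 ≤ r)
    (h : ℝ) (y : ℝ) (hh : h = Real.sqrt 3 / 2) (hy : y = h / 3)
    (hopp : dist p₁ p₂ ≥ h)
    (f g : ℝ → EuclideanSpace ℝ (Fin 2))
    (hf : LipschitzWith 1 f) (hg : LipschitzWith 1 g)
    (hf1 : f t' = p₁) (hg2 : g t = p₂)
    (ht' : t' ≥ 1 / 2 + y) (htt : t' < t) (ht : t < 1 / 2 + 4 * y - r) :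
    ∀ tz ∈ Set.Icc t' t, dist (f tz) (g tz) > r :=
  stmt7_general p₁ p₂ r t' t h y hy hopp f g hf hg hf1 hg2 ht' ht
end

section
/- Let A, B be two points at distance 1 and let L₁, L₂ be two rays along which agents R₁, R₂ travel at speed 1, starting simultaneously from B and C respectively, moving toward each other along segment BA and from C with R₂ having found the exit at C. If Q is the point on BA where |BQ| = |QC| − r (so that the agents are exactly distance r apart when R₁ is at Q), then the total time for R₁, after being informed, to reach C from Q is |BQ| + |QC|, and this total equals r + 2(1−r²)/(2r+1). -/
open RealInnerProductSpace


/-- In a unit equilateral triangle, if `Q` on side `BA` satisfies `|BQ| = |QC| − r`,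
then `|BQ| + |QC| = r + 2(1 − r²)/(2r + 1)`. -/
theorem stmt18 (A B C Q : EuclideanSpace ℝ (Fin 2)) (r : ℝ)
    (hr : r ∈ Set.Icc (0 : ℝ) 1)
    (hAB : dist A B = 1) (hBC : dist B C = 1) (hCA : dist C A = 1)
    (hQ : Q ∈ segment ℝ B A) (hint : dist B Q = dist Q C - r) :
    dist B Q + dist Q C = r + 2 * (1 - r ^ 2) / (2 * r + 1) := by
  obtain ⟨hr0, hr1⟩ := hr
  obtain ⟨a, b, ha, hb, hab, hQ⟩ := hQ
  set u : EuclideanSpace ℝ (Fin 2) := B - C with hu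
  set v : EuclideanSpace ℝ (Fin 2) := A - C with hv
  have hnu : ‖u‖ = 1 := by rw [hu, ← dist_eq_norm]; exact hBC
  have hnv : ‖v‖ = 1 := by rw [hv, ← dist_eq_norm, dist_comm]; exact hCA
  have hnuv : ‖u - v‖ = 1 := by
    have : u - v = B - A := by rw [hu, hv]; abel
    rw [this, ← dist_eq_norm, dist_comm]; exact hAB
  have hinner : (inner ℝ u v : ℝ) = 1/2 := by
    have h := norm_sub_sq_real u v
    rw [hnu, hnv, hnuv] at h
    nlinarith
  -- dist B Q = b
  have hBA : ‖B - A‖ = 1 := by rw [← dist_eq_norm, dist_comm]; exact hAB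
  have hdBQ : dist B Q = b := by
    have hQB : B - Q = b • (B - A) := by
      rw [← hQ]
      have : a = 1 - b := by linarith
      rw [this]
      module
    rw [dist_eq_norm, hQB, norm_smul, hBA, Real.norm_eq_abs, abs_of_nonneg hb, mul_one]
  -- dist Q C ^ 2 = b^2 - b + 1
  have hQC : Q - C = a • u + b • v := by
    rw [← hQ, hu, hv]
    have : a = 1 - b := by linarith
    rw [this]; module
  have hdQC2 : (dist Q C)^2 = b^2 - b + 1 := by
    have hvu : (inner ℝ v u : ℝ) = 1/2 := by rw [real_inner_comm]; exact hinner
    rw [dist_eq_norm, hQC, ← real_inner_self_eq_norm_sq]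
    simp only [inner_add_add_self, real_inner_smul_left, real_inner_smul_right,
      real_inner_self_eq_norm_sq, hinner, hvu, hnu, hnv]
    have : a = 1 - b := by linarith
    rw [this, norm_smul, norm_smul, hnu, hnv, Real.norm_eq_abs, Real.norm_eq_abs,
      abs_of_nonneg hb, abs_of_nonneg (by linarith : (0:ℝ) ≤ 1 - b)]
    ring
  rw [hdBQ] at hint
  have hQCpos : dist Q C = b + r := by linarith
  rw [hQCpos] at hdQC2
  have hkey : b * (2*r + 1) = 1 - r^2 := by nlinarith [hdQC2]
  have hden : (2*r + 1) ≠ 0 := by positivity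
  rw [hdBQ, hQCpos]
  have hb' : b = (1 - r^2)/(2*r+1) := by field_simp; linarith [hkey]
  rw [hb']
  ring
end
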